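/- arXiv:1808.00529 — 5 statements merged into one kernel-verified Lean document; each statement's English description precedes it below -/
import Mathlib

section
/- Let 0 < α ≤ α' ≤ 1, let F₀, F_a : ℝ → ℝ be monotone nondecreasing functions with F₀(x) → 0 and F_a(x) → 0 as x → −∞ and F₀(x) → 1 and F_a(x) → 1 as x → +∞. Set Fₘ(x) = (1−α)·F₀(x) + α·F_a(x) and F'_a(x) = (Fₘ(x) − (1−α')·F₀(x)) / α'. Then F'_a is monotone nondecreasing, F'_a(x) → 0 as x → −∞, and F'_a(x) → 1 as x → +∞ (i.e., F'_a is a legal CDF). -/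
/-!
Dividing by `α'` exhibits `F'_a` as the mixture `(1 - α/α')·F₀ + (α/α')·F_a`, whose weights are
nonnegative exactly because `α ≤ α'`; a mixture of CDFs is a CDF.
-/

open Filter Topology

def IsCDF {X : Type*} [Preorder X] (F : X → ℝ) : Prop :=
  Monotone F ∧ Tendsto F atBot (𝓝 0) ∧ Tendsto F atTop (𝓝 1)

theorem IsCDF.mixture {X : Type*} [Preorder X] {F G : X → ℝ} (hF : IsCDF F) (hG : IsCDF G)
    {a b : ℝ} (ha : 0 ≤ a) (hb : 0 ≤ b) (hab : a + b = 1) :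
    IsCDF fun x => a * F x + b * G x := by
  obtain ⟨hFmono, hFbot, hFtop⟩ := hF
  obtain ⟨hGmono, hGbot, hGtop⟩ := hG
  refine ⟨fun x y hxy => ?_, ?_, ?_⟩
  · exact add_le_add (mul_le_mul_of_nonneg_left (hFmono hxy) ha)
      (mul_le_mul_of_nonneg_left (hGmono hxy) hb)
  · simpa using (hFbot.const_mul a).add (hGbot.const_mul b)
  · simpa [hab] using (hFtop.const_mul a).add (hGtop.const_mul b)

theorem overestimate_alien_cdf_is_legal_cdf_general
    (α α' : ℝ) (hα : 0 < α) (hαα' : α ≤ α')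
    (F₀ Fa : ℝ → ℝ)
    (hF₀mono : Monotone F₀) (hFamono : Monotone Fa)
    (hF₀bot : Tendsto F₀ atBot (nhds 0)) (hFabot : Tendsto Fa atBot (nhds 0))
    (hF₀top : Tendsto F₀ atTop (nhds 1)) (hFatop : Tendsto Fa atTop (nhds 1))
    (Fₘ : ℝ → ℝ) (hFₘ : ∀ x, Fₘ x = (1 - α) * F₀ x + α * Fa x)
    (F'a : ℝ → ℝ) (hF'a : ∀ x, F'a x = (Fₘ x - (1 - α') * F₀ x) / α') :
    Monotone F'a ∧ Tendsto F'a atBot (nhds 0) ∧ Tendsto F'a atTop (nhds 1) := by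
  have hα'_pos : 0 < α' := hα.trans_le hαα'
  have hF'a_eq : F'a = fun x => (1 - α / α') * F₀ x + α / α' * Fa x := by
    funext x
    rw [hF'a, hFₘ]
    field_simp
    ring
  have hweight : 0 ≤ 1 - α / α' := sub_nonneg.mpr ((div_le_one hα'_pos).mpr hαα')
  rw [hF'a_eq]
  exact IsCDF.mixture ⟨hF₀mono, hF₀bot, hF₀top⟩ ⟨hFamono, hFabot, hFatop⟩ hweight
    (div_nonneg hα.le hα'_pos.le) (sub_add_cancel 1 _)

/-- If `F₀` and `F_a` are legal CDFs (monotone nondecreasing with limit 0 at −∞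
and limit 1 at +∞), then `F'_a(x) = (Fₘ(x) − (1−α')·F₀(x)) / α'` is also a
legal CDF, for any `0 < α ≤ α' ≤ 1`. -/
theorem overestimate_alien_cdf_is_legal_cdf
    (α α' : ℝ) (hα : 0 < α) (hαα' : α ≤ α') (hα' : α' ≤ 1)
    (F₀ Fa : ℝ → ℝ)
    (hF₀mono : Monotone F₀) (hFamono : Monotone Fa)
    (hF₀bot : Tendsto F₀ atBot (nhds 0)) (hFabot : Tendsto Fa atBot (nhds 0))
    (hF₀top : Tendsto F₀ atTop (nhds 1)) (hFatop : Tendsto Fa atTop (nhds 1))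
    (Fₘ : ℝ → ℝ) (hFₘ : ∀ x, Fₘ x = (1 - α) * F₀ x + α * Fa x)
    (F'a : ℝ → ℝ) (hF'a : ∀ x, F'a x = (Fₘ x - (1 - α') * F₀ x) / α') :
    Monotone F'a ∧ Tendsto F'a atBot (nhds 0) ∧ Tendsto F'a atTop (nhds 1) :=
  overestimate_alien_cdf_is_legal_cdf_general α α' hα hαα' F₀ Fa hF₀mono hFamono hF₀bot hFabot
    hF₀top hFatop Fₘ hFₘ F'a hF'a
end

section
/- Let 0 < α ≤ α' ≤ 1, let F₀, F_a : ℝ → ℝ, set Fₘ(x) = (1−α)·F₀(x) + α·F_a(x), and define F'_a(x) = (Fₘ(x) − (1−α')·F₀(x)) / α'. Then for every x ∈ ℝ, F'_a(x) − F_a(x) = (α − α')·(Fₘ(x) − F₀(x)) / (α·α'); in particular, if the anomaly detector is admissible, i.e., F₀(x) ≥ Fₘ(x) for all x ∈ ℝ, then F_a(x) ≤ F'_a(x) for all x ∈ ℝ. -/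
/-!
If `Fₘ = (1 - α) F₀ + α F_a`, then `F_a = F₀ + (Fₘ - F₀) / α`; solving the same equation with
`α'` in place of `α` gives `F'_a = F₀ + (Fₘ - F₀) / α'`. Hence
`F'_a - F_a = (Fₘ - F₀) (1/α' - 1/α)`, a product of two nonpositive factors when `Fₘ ≤ F₀`
and `α ≤ α'`.
-/

section Unmix

variable {K : Type*}

/-- Solves `m = (1 - a) * f + a * g` for `g`. -/
def unmix [Field K] (a m f : K) : K := (m - (1 - a) * f) / a

theorem unmix_eq_add_div [Field K] {a : K} (ha : a ≠ 0) (m f : K) :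
    unmix a m f = f + (m - f) / a := by
  unfold unmix
  field_simp
  ring

theorem unmix_mix [Field K] {a : K} (ha : a ≠ 0) (f g : K) :
    unmix a ((1 - a) * f + a * g) f = g := by
  unfold unmix
  field_simp
  ring

theorem unmix_sub_unmix [Field K] {a a' : K} (ha : a ≠ 0) (ha' : a' ≠ 0) (m f : K) :
    unmix a' m f - unmix a m f = (a - a') * (m - f) / (a * a') := by
  rw [unmix_eq_add_div ha, unmix_eq_add_div ha']
  field_simp
  ring

theorem unmix_le_unmix_of_le [Field K] [LinearOrder K] [IsStrictOrderedRing K] {a a' m f : K}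
    (ha : 0 < a) (haa' : a ≤ a') (hmf : m ≤ f) :
    unmix a m f ≤ unmix a' m f := by
  have ha' : 0 < a' := ha.trans_le haa'
  have hdiff := unmix_sub_unmix ha.ne' ha'.ne' m f
  have hnonneg : 0 ≤ (a - a') * (m - f) / (a * a') :=
    div_nonneg (mul_nonneg_of_nonpos_of_nonpos (sub_nonpos.2 haa') (sub_nonpos.2 hmf))
      (mul_pos ha ha').le
  linarith

end Unmix

theorem overestimate_alien_cdf_dominates_general
    (α α' : ℝ) (hα : 0 < α) (hαα' : α ≤ α')
    (F₀ Fa : ℝ → ℝ)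
    (Fₘ : ℝ → ℝ) (hFₘ : ∀ x, Fₘ x = (1 - α) * F₀ x + α * Fa x)
    (F'a : ℝ → ℝ) (hF'a : ∀ x, F'a x = (Fₘ x - (1 - α') * F₀ x) / α') :
    (∀ x, F'a x - Fa x = (α - α') * (Fₘ x - F₀ x) / (α * α')) ∧
      ((∀ x, F₀ x ≥ Fₘ x) → ∀ x, Fa x ≤ F'a x) := by
  have hFa : ∀ x, Fa x = unmix α (Fₘ x) (F₀ x) := fun x => by
    rw [hFₘ x, unmix_mix hα.ne']
  have hF'a' : ∀ x, F'a x = unmix α' (Fₘ x) (F₀ x) := hF'a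
  refine ⟨fun x => ?_, fun hadm x => ?_⟩
  · rw [hFa x, hF'a' x]
    exact unmix_sub_unmix hα.ne' (hα.trans_le hαα').ne' _ _
  · rw [hFa x, hF'a' x]
    exact unmix_le_unmix_of_le hα hαα' (hadm x)

/-- The difference between the over-estimated alien CDF and the true alien CDF
is `(α − α')·(Fₘ(x) − F₀(x)) / (α·α')`; under admissibility (`F₀ ≥ Fₘ`
pointwise), it follows that `F_a ≤ F'_a` pointwise. -/
theorem overestimate_alien_cdf_dominates
    (α α' : ℝ) (hα : 0 < α) (hαα' : α ≤ α') (hα' : α' ≤ 1)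
    (F₀ Fa : ℝ → ℝ)
    (Fₘ : ℝ → ℝ) (hFₘ : ∀ x, Fₘ x = (1 - α) * F₀ x + α * Fa x)
    (F'a : ℝ → ℝ) (hF'a : ∀ x, F'a x = (Fₘ x - (1 - α') * F₀ x) / α') :
    (∀ x, F'a x - Fa x = (α - α') * (Fₘ x - F₀ x) / (α * α')) ∧
      ((∀ x, F₀ x ≥ Fₘ x) → ∀ x, Fa x ≤ F'a x) :=
  overestimate_alien_cdf_dominates_general α α' hα hαα' F₀ Fa Fₘ hFₘ F'a hF'a
end

section
/- Let 0 < α ≤ α' ≤ 1, let F₀, F_a : ℝ → ℝ, set Fₘ(x) = (1−α)·F₀(x) + α·F_a(x), and define F'_a(x) = (Fₘ(x) − (1−α')·F₀(x)) / α'. Suppose the anomaly detector is admissible, i.e., F₀(x) ≥ Fₘ(x) for all x ∈ ℝ. Then for any q, ε ∈ ℝ, every threshold τ ∈ ℝ with F'_a(τ) ≤ q + ε also satisfies F_a(τ) ≤ q + ε. -/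
/-- Under admissibility, a threshold achieving `F'_a(τ) ≤ q + ε` for the
over-estimated alien CDF also achieves `F_a(τ) ≤ q + ε` for the true one. -/
theorem overestimate_threshold_transfer
    (α α' : ℝ) (hα : 0 < α) (hαα' : α ≤ α') (hα' : α' ≤ 1)
    (F₀ Fa : ℝ → ℝ)
    (Fₘ : ℝ → ℝ) (hFₘ : ∀ x, Fₘ x = (1 - α) * F₀ x + α * Fa x)
    (F'a : ℝ → ℝ) (hF'a : ∀ x, F'a x = (Fₘ x - (1 - α') * F₀ x) / α')
    (hadm : ∀ x, F₀ x ≥ Fₘ x) :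
    ∀ q ε τ : ℝ, F'a τ ≤ q + ε → Fa τ ≤ q + ε := by
  intro q ε τ h
  have hα'pos : 0 < α' := lt_of_lt_of_le hα hαα'
  have hFa : Fa τ ≤ F₀ τ := by
    have := hadm τ
    rw [hFₘ τ] at this
    nlinarith
  have : Fa τ ≤ F'a τ := by
    rw [hF'a τ, hFₘ τ, le_div_iff₀ hα'pos]
    nlinarith
  linarith
end

section
/- (Theorem 1, conditional form.) Let (Ω, 𝓕, P) be a probability space, α ∈ (0,1], q ∈ ℝ, ε ∈ (0, 1−q), δ ∈ (0,1), and let n satisfy n > (1/2)·ln(2/(1−√(1−δ)))·(1/ε)²·((2−α)/α)². Let F₀, F_a : ℝ → ℝ be the true nominal and alien score CDFs, set Fₘ(x) = (1−α)·F₀(x) + α·F_a(x), and let F̂₀, F̂ₘ : Ω × ℝ → ℝ be measurable random functions (the empirical CDFs of size-n samples). Suppose the events A = {ω : ∃x, |F̂ₘ(ω,x) − Fₘ(x)| > α·ε/(2−α)} and B = {ω : ∃x, |F̂₀(ω,x) − F₀(x)| > α·ε/(2−α)} are measurable, independent, and each has probability at most 2·exp(−2·n·(α·ε/(2−α))²)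 (Massart's inequality). Then with probability at least 1 − δ over ω, every threshold τ ∈ ℝ satisfying (F̂ₘ(ω,τ) − (1−α)·F̂₀(ω,τ))/α ≤ q also satisfies F_a(τ) ≤ q + ε; in particular, any threshold returned by Algorithm 1 achieves an alien detection rate of at least 1 − q − ε. -/
open MeasureTheory

/-!
Outside the two deviation events both empirical CDFs are uniformly within `r = αε/(2-α)` of
the truth, and then `F_a ≤ F̂_a + (r + (1-α)r)/α = F̂_a + ε`. By independence the good event
has probability at least `(1 - P A)(1 - P B)`, and the sample-size condition makes each
Massart bound smaller than `1 - √(1-δ)`, so this product is at least `1 - δ`.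
-/

lemma le_add_of_abs_sub_le_of_mixture {α r e q m m' f f' fa : ℝ} (hα₀ : 0 < α) (hα₁ : α ≤ 1)
    (hre : (2 - α) * r ≤ α * e) (hm : m = (1 - α) * f + α * fa)
    (hm' : |m' - m| ≤ r) (hf' : |f' - f| ≤ r) (hq : (m' - (1 - α) * f') / α ≤ q) :
    fa ≤ q + e := by
  rw [div_le_iff₀ hα₀] at hq
  obtain ⟨hm'₁, -⟩ := abs_le.mp hm'
  obtain ⟨-, hf'₂⟩ := abs_le.mp hf'
  nlinarith

lemma two_mul_exp_neg_lt_of_log_div_lt {t r n : ℝ} (ht : 0 < t) (hr : 0 < r)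
    (hn : Real.log (2 / t) / (2 * r ^ 2) < n) :
    2 * Real.exp (-2 * n * r ^ 2) < t := by
  rw [div_lt_iff₀ (by positivity)] at hn
  have : Real.exp (-2 * n * r ^ 2) < Real.exp (-Real.log (2 / t)) :=
    Real.exp_lt_exp.mpr (by linarith)
  rw [Real.exp_neg, Real.exp_log (by positivity), inv_div] at this
  linarith

namespace MeasureTheory

variable {Ω : Type*} [MeasurableSpace Ω] {μ : Measure Ω} [IsProbabilityMeasure μ] {A B : Set Ω}

lemma one_sub_measureReal_le_measureReal_compl (A : Set Ω) : 1 - μ.real A ≤ μ.real Aᶜ := by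
  have := measureReal_union_le (μ := μ) A Aᶜ
  rw [Set.union_compl_self, probReal_univ] at this
  linarith

lemma mul_one_sub_measureReal_le_measureReal_compl_union (hB : MeasurableSet B)
    (hAB : μ (A ∩ B) = μ A * μ B) :
    (1 - μ.real A) * (1 - μ.real B) ≤ μ.real (A ∪ B)ᶜ := by
  have hinter : μ.real (A ∩ B) = μ.real A * μ.real B := by
    simp only [measureReal_def, hAB, ENNReal.toReal_mul]
  have := measureReal_union_add_inter (μ := μ) (s := A) hB
  linarith [one_sub_measureReal_le_measureReal_compl (μ := μ) (A ∪ B)]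

end MeasureTheory

theorem theorem1_conditional_general (Ω : Type*) [MeasurableSpace Ω]
    (P : Measure Ω) [IsProbabilityMeasure P]
    (α : ℝ) (hα : α ∈ Set.Ioc (0 : ℝ) 1)
    (q ε : ℝ) (hε : ε ∈ Set.Ioo (0 : ℝ) (1 - q))
    (δ : ℝ) (hδ : δ ∈ Set.Ioo (0 : ℝ) 1)
    (n : ℝ)
    (hn : n > (1 / 2) * Real.log (2 / (1 - Real.sqrt (1 - δ))) * (1 / ε) ^ 2
            * ((2 - α) / α) ^ 2)
    (F₀ Fa : ℝ → ℝ)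
    (Fₘ : ℝ → ℝ) (hFₘ : ∀ x, Fₘ x = (1 - α) * F₀ x + α * Fa x)
    (Fhat₀ Fhatₘ : Ω → ℝ → ℝ)
    (A B : Set Ω)
    (hAdef : A = {ω | ∃ x, |Fhatₘ ω x - Fₘ x| > α * ε / (2 - α)})
    (hBdef : B = {ω | ∃ x, |Fhat₀ ω x - F₀ x| > α * ε / (2 - α)})
    (hBmeas : MeasurableSet B)
    (hindep : P (A ∩ B) = P A * P B)
    (hPA : (P A).toReal ≤ 2 * Real.exp (-2 * n * (α * ε / (2 - α)) ^ 2))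
    (hPB : (P B).toReal ≤ 2 * Real.exp (-2 * n * (α * ε / (2 - α)) ^ 2)) :
    1 - δ ≤
      (P {ω | ∀ τ : ℝ, (Fhatₘ ω τ - (1 - α) * Fhat₀ ω τ) / α ≤ q →
          Fa τ ≤ q + ε}).toReal := by
  obtain ⟨hα₀, hα₁⟩ := hα
  obtain ⟨hε₀, -⟩ := hε
  have h2α : 0 < 2 - α := by linarith
  set r := α * ε / (2 - α) with hr
  have hr₀ : 0 < r := div_pos (mul_pos hα₀ hε₀) h2α
  set c := Real.sqrt (1 - δ)
  have hc : c < 1 := (Real.sqrt_lt' one_pos).mpr (by linarith [hδ.1])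
  have htail : 2 * Real.exp (-2 * n * r ^ 2) < 1 - c := by
    refine two_mul_exp_neg_lt_of_log_div_lt (by linarith) hr₀ (lt_of_eq_of_lt ?_ hn)
    rw [hr]; field_simp
  have hgood : (A ∪ B)ᶜ ⊆ {ω | ∀ τ : ℝ, (Fhatₘ ω τ - (1 - α) * Fhat₀ ω τ) / α ≤ q →
      Fa τ ≤ q + ε} := by
    intro ω hω τ hτ
    simp only [Set.compl_union, Set.mem_inter_iff, Set.mem_compl_iff, hAdef, hBdef,
      Set.mem_ofPred_eq, not_exists, not_lt] at hω
    exact le_add_of_abs_sub_le_of_mixture hα₀ hα₁ (mul_div_cancel₀ _ h2α.ne').le (hFₘ τ)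
      (hω.1 τ) (hω.2 τ) hτ
  calc 1 - δ = c * c := (Real.mul_self_sqrt (by linarith [hδ.2])).symm
    _ ≤ (1 - P.real A) * (1 - P.real B) :=
        mul_le_mul (by linarith [P.real_def A]) (by linarith [P.real_def B])
          (Real.sqrt_nonneg _) (sub_nonneg.mpr measureReal_le_one)
    _ ≤ P.real (A ∪ B)ᶜ := mul_one_sub_measureReal_le_measureReal_compl_union hBmeas hindep
    _ ≤ _ := measureReal_mono hgood

/-- Theorem 1 (conditional form).  Under the sample-size condition, if the two
sup-norm deviation events are independent and each bounded by the Massart/DKW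
tail bound, then with probability at least `1 − δ`, every threshold `τ` with
`F̂_a(τ) ≤ q` satisfies `F_a(τ) ≤ q + ε`. -/
theorem theorem1_conditional (Ω : Type*) [MeasurableSpace Ω]
    (P : Measure Ω) [IsProbabilityMeasure P]
    (α : ℝ) (hα : α ∈ Set.Ioc (0 : ℝ) 1)
    (q ε : ℝ) (hε : ε ∈ Set.Ioo (0 : ℝ) (1 - q))
    (δ : ℝ) (hδ : δ ∈ Set.Ioo (0 : ℝ) 1)
    (n : ℝ)
    (hn : n > (1 / 2) * Real.log (2 / (1 - Real.sqrt (1 - δ))) * (1 / ε) ^ 2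
            * ((2 - α) / α) ^ 2)
    (F₀ Fa : ℝ → ℝ)
    (Fₘ : ℝ → ℝ) (hFₘ : ∀ x, Fₘ x = (1 - α) * F₀ x + α * Fa x)
    (Fhat₀ Fhatₘ : Ω → ℝ → ℝ)
    (A B : Set Ω)
    (hAdef : A = {ω | ∃ x, |Fhatₘ ω x - Fₘ x| > α * ε / (2 - α)})
    (hBdef : B = {ω | ∃ x, |Fhat₀ ω x - F₀ x| > α * ε / (2 - α)})
    (hAmeas : MeasurableSet A) (hBmeas : MeasurableSet B)
    (hindep : P (A ∩ B) = P A * P B)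
    (hPA : (P A).toReal ≤ 2 * Real.exp (-2 * n * (α * ε / (2 - α)) ^ 2))
    (hPB : (P B).toReal ≤ 2 * Real.exp (-2 * n * (α * ε / (2 - α)) ^ 2)) :
    1 - δ ≤
      (P {ω | ∀ τ : ℝ, (Fhatₘ ω τ - (1 - α) * Fhat₀ ω τ) / α ≤ q →
          Fa τ ≤ q + ε}).toReal :=
  theorem1_conditional_general Ω P α hα q ε hε δ hδ n hn F₀ Fa Fₘ hFₘ Fhat₀ Fhatₘ A B hAdef hBdef
    hBmeas hindep hPA hPB
end

section
/- (Corollary 1, conditional form.) Let (Ω, 𝓕, P) be a probability space, let 0 < α ≤ α' ≤ 1, q ∈ ℝ, ε ∈ (0, 1−q), δ ∈ (0,1), and let n satisfy n > (1/2)·ln(2/(1−√(1−δ)))·(1/ε)²·((2−α')/α')². Let F₀, F_a : ℝ → ℝ be the true nominal and alien score CDFs, set Fₘ(x) = (1−α)·F₀(x) + α·F_a(x), and assume admissibility: F₀(x) ≥ Fₘ(x) for all x ∈ ℝ. Define F'_a(x) = (Fₘ(x) − (1−α')·F₀(x)) / α'. Let F̂₀, F̂ₘ : Ω × ℝ → ℝ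 be measurable random functions such that the events A = {ω : ∃x, |F̂ₘ(ω,x) − Fₘ(x)| > α'·ε/(2−α')} and B = {ω : ∃x, |F̂₀(ω,x) − F₀(x)| > α'·ε/(2−α')} are measurable, independent, and each has probability at most 2·exp(−2·n·(α'·ε/(2−α'))²). Then with probability at least 1 − δ over ω, every threshold τ ∈ ℝ satisfying (F̂ₘ(ω,τ) − (1−α')·F̂₀(ω,τ))/α' ≤ q also satisfies F_a(τ) ≤ q + ε; that is, running Algorithm 1 with the upper bound α' in place of α still achieves an alien detection rate of at least 1 − q − ε. -/
open MeasureTheory ProbabilityTheory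

/-!
Under admissibility the nominal CDF dominates the alien one, so overestimating the alien
fraction only biases `F'_a = (Fₘ - (1 - α') F₀) / α'` upwards: `F_a ≤ F'_a`. If both empirical
CDFs are uniformly `λ`-close to the true ones, `F'_a` and its plug-in estimate differ by at most
`(2 - α') λ / α' = ε`, so any threshold with estimate `≤ q` has `F_a(τ) ≤ q + ε`. By independence
the two closeness events hold simultaneously with probability `(1 - P A)(1 - P B)`, and the sample
size makes each factor at least `√(1 - δ)`.
-/

/-- The paper's `F'_a`, evaluated pointwise from a mixture value `m` and a nominal value `f`. -/
noncomputable def alienCDFEstimate (α' m f : ℝ) : ℝ := (m - (1 - α') * f) / α'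

lemma le_alienCDFEstimate_of_le {α α' f fa : ℝ} (hα : 0 < α) (hαα' : α ≤ α') (hfa : fa ≤ f) :
    fa ≤ alienCDFEstimate α' ((1 - α) * f + α * fa) f := by
  rw [alienCDFEstimate, le_div_iff₀ (hα.trans_le hαα')]
  nlinarith [mul_nonneg (sub_nonneg.2 hαα') (sub_nonneg.2 hfa)]

lemma alienCDFEstimate_sub_le {α' m m' f f' r : ℝ} (hα' : 0 < α') (hα'1 : α' ≤ 1)
    (hm : |m' - m| ≤ r) (hf : |f' - f| ≤ r) :
    alienCDFEstimate α' m f - alienCDFEstimate α' m' f' ≤ (2 - α') * r / α' := by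
  rw [alienCDFEstimate, alienCDFEstimate, ← sub_div, div_le_div_iff_of_pos_right hα']
  have hf' : (1 - α') * (f' - f) ≤ (1 - α') * r :=
    mul_le_mul_of_nonneg_left (abs_le.1 hf).2 (by linarith)
  linarith [(abs_le.1 hm).1]

lemma le_add_of_alienCDFEstimate_le {α α' r q f fa f' m' : ℝ} (hα : 0 < α) (hαα' : α ≤ α')
    (hα' : α' ≤ 1) (hadm : (1 - α) * f + α * fa ≤ f)
    (hm : |m' - ((1 - α) * f + α * fa)| ≤ r) (hf : |f' - f| ≤ r)
    (hq : alienCDFEstimate α' m' f' ≤ q) :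
    fa ≤ q + (2 - α') * r / α' := by
  have hfa : fa ≤ f := le_of_mul_le_mul_left (by linarith) hα
  linarith [le_alienCDFEstimate_of_le hα hαα' hfa,
    alienCDFEstimate_sub_le (hα.trans_le hαα') hα' hm hf]

lemma two_mul_exp_le_of_lt_log_div {n r c : ℝ} (hr : 0 < r) (hc : 0 < c)
    (hn : (1 / 2) * Real.log (2 / c) / r ^ 2 < n) :
    2 * Real.exp (-2 * n * r ^ 2) ≤ c := by
  rw [div_lt_iff₀ (by positivity), Real.log_div two_ne_zero hc.ne'] at hn
  have hexp : Real.exp (-2 * n * r ^ 2) ≤ c / 2 := by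
    rw [← Real.exp_log (half_pos hc), Real.exp_le_exp, Real.log_div hc.ne' two_ne_zero]
    linarith
  linarith

lemma ProbabilityTheory.IndepSet.measureReal_compl_inter_compl {Ω : Type*} [MeasurableSpace Ω]
    {μ : Measure Ω} [IsProbabilityMeasure μ] {s t : Set Ω} (h : IndepSet s t μ)
    (hs : MeasurableSet s) (ht : MeasurableSet t) :
    μ.real (sᶜ ∩ tᶜ) = (1 - μ.real s) * (1 - μ.real t) := by
  have hc : IndepSet sᶜ tᶜ μ := Indep.indepSet_of_measurableSet h
    (MeasurableSpace.measurableSet_generateFrom (Set.mem_singleton _)).compl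
    (MeasurableSpace.measurableSet_generateFrom (Set.mem_singleton _)).compl
  rw [measureReal_def, hc.measure_inter_eq_mul, ENNReal.toReal_mul, ← measureReal_def,
    ← measureReal_def, probReal_compl_eq_one_sub hs, probReal_compl_eq_one_sub ht]

/-- Corollary 1 (conditional form).  Running Algorithm 1 with an upper bound
`α' ≥ α` on the alien fraction, under admissibility and the sample-size
condition computed with `α'`, still yields with probability at least `1 − δ`
that every returned threshold `τ` satisfies `F_a(τ) ≤ q + ε`. -/
theorem corollary1_conditional (Ω : Type*) [MeasurableSpace Ω]
    (P : Measure Ω) [IsProbabilityMeasure P]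
    (α α' : ℝ) (hα : 0 < α) (hαα' : α ≤ α') (hα' : α' ≤ 1)
    (q ε : ℝ) (hε : ε ∈ Set.Ioo (0 : ℝ) (1 - q))
    (δ : ℝ) (hδ : δ ∈ Set.Ioo (0 : ℝ) 1)
    (n : ℝ)
    (hn : n > (1 / 2) * Real.log (2 / (1 - Real.sqrt (1 - δ))) * (1 / ε) ^ 2
            * ((2 - α') / α') ^ 2)
    (F₀ Fa : ℝ → ℝ)
    (Fₘ : ℝ → ℝ) (hFₘ : ∀ x, Fₘ x = (1 - α) * F₀ x + α * Fa x)
    (hadm : ∀ x, F₀ x ≥ Fₘ x)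
    (Fhat₀ Fhatₘ : Ω → ℝ → ℝ)
    (A B : Set Ω)
    (hAdef : A = {ω | ∃ x, |Fhatₘ ω x - Fₘ x| > α' * ε / (2 - α')})
    (hBdef : B = {ω | ∃ x, |Fhat₀ ω x - F₀ x| > α' * ε / (2 - α')})
    (hAmeas : MeasurableSet A) (hBmeas : MeasurableSet B)
    (hindep : P (A ∩ B) = P A * P B)
    (hPA : (P A).toReal ≤ 2 * Real.exp (-2 * n * (α' * ε / (2 - α')) ^ 2))
    (hPB : (P B).toReal ≤ 2 * Real.exp (-2 * n * (α' * ε / (2 - α')) ^ 2)) :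
    1 - δ ≤
      (P {ω | ∀ τ : ℝ, (Fhatₘ ω τ - (1 - α') * Fhat₀ ω τ) / α' ≤ q →
          Fa τ ≤ q + ε}).toReal := by
  have hα'0 : 0 < α' := hα.trans_le hαα'
  have h2α' : 0 < 2 - α' := by linarith
  set r := α' * ε / (2 - α') with hr_def
  have hr : 0 < r := div_pos (mul_pos hα'0 hε.1) h2α'
  have hr_err : (2 - α') * r / α' = ε := by
    rw [hr_def]; field_simp
  set s := Real.sqrt (1 - δ)
  have hs : s < 1 := by
    rw [Real.sqrt_lt' one_pos]; linarith [hδ.1]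
  have hcut : 2 * Real.exp (-2 * n * r ^ 2) ≤ 1 - s := by
    refine two_mul_exp_le_of_lt_log_div hr (by linarith) (lt_of_eq_of_lt ?_ hn)
    rw [hr_def]; field_simp
  have hgood : Aᶜ ∩ Bᶜ ⊆ {ω | ∀ τ : ℝ, (Fhatₘ ω τ - (1 - α') * Fhat₀ ω τ) / α' ≤ q →
      Fa τ ≤ q + ε} := by
    rintro ω ⟨hA, hB⟩ τ hτ
    simp only [hAdef, hBdef, Set.mem_compl_iff, Set.mem_ofPred_eq, not_exists, not_lt] at hA hB
    rw [← hr_err]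
    exact le_add_of_alienCDFEstimate_le hα hαα' hα' (hFₘ τ ▸ hadm τ) (hFₘ τ ▸ hA τ) (hB τ) hτ
  rw [← measureReal_def] at hPA hPB ⊢
  calc 1 - δ = s * s := (Real.mul_self_sqrt (by linarith [hδ.2])).symm
    _ ≤ (1 - P.real A) * (1 - P.real B) :=
      mul_le_mul (by linarith) (by linarith) (Real.sqrt_nonneg _)
        (by linarith [measureReal_le_one (μ := P) (s := A)])
    _ = P.real (Aᶜ ∩ Bᶜ) :=
      (((indepSet_iff_measure_inter_eq_mul hAmeas hBmeas P).2 hindep).measureReal_compl_inter_compl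
        hAmeas hBmeas).symm
    _ ≤ _ := measureReal_mono hgood
end
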